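/- Let λ = (n−k+1, 1^k) be a hook partition of n. Then sum_{T ∈ SYT(λ)} q^{maj(T)} = q^{binomial(k+1,2)} · binomial(n, k)_q, where binomial(n,k)_q is the q-binomial coefficient. -/

import Mathlib

open Finset Polynomial

/-- The hook length of a cell `c` in the partition (Young diagram) `μ`: the number of
cells weakly to the right of `c` in its row plus the number strictly below in its
column. -/
def hookLen (μ : YoungDiagram) (c : ℕ × ℕ) : ℕ :=
  (μ.cells.filter (fun x => x.1 = c.1 ∧ c.2 ≤ x.2)).card +
    (μ.cells.filter (fun x => x.2 = c.2 ∧ c.1 < x.1)).card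

/-- A standard Young tableau of shape `μ`: a bijective filling of the cells of `μ` by
`1, …, n` strictly increasing along rows (left to right) and down columns. -/
abbrev SYT (μ : YoungDiagram) : Type :=
  {T : μ.cells → (Finset.Icc 1 μ.cells.card : Finset ℕ) //
    Function.Bijective T ∧
      ∀ c c' : μ.cells,
        (((c : ℕ × ℕ).1 = (c' : ℕ × ℕ).1 ∧ (c : ℕ × ℕ).2 < (c' : ℕ × ℕ).2) ∨
          ((c : ℕ × ℕ).2 = (c' : ℕ × ℕ).2 ∧ (c : ℕ × ℕ).1 < (c' : ℕ × ℕ).1)) →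
          (T c : ℕ) < (T c' : ℕ)}

noncomputable instance (μ : YoungDiagram) : Fintype (SYT μ) := Fintype.ofFinite _

open scoped Classical in
/-- The major index of a standard Young tableau: the sum of all labels `i` such that
`i + 1` lies in a strictly lower row than `i`. -/
noncomputable def maj {μ : YoungDiagram} (T : SYT μ) : ℕ :=
  ∑ i ∈ (Finset.Icc 1 (μ.cells.card - 1)).filter
      (fun i => ∃ c c' : μ.cells, (T.1 c : ℕ) = i ∧ (T.1 c' : ℕ) = i + 1 ∧
        (c : ℕ × ℕ).1 < (c' : ℕ × ℕ).1), i

/-- The `q`-integer `[n]_q = 1 + q + ⋯ + q^{n-1}` as a polynomial over `ℚ`. -/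
noncomputable def qInt (n : ℕ) : Polynomial ℚ := ∑ i ∈ Finset.range n, Polynomial.X ^ i

/-- The `q`-factorial `[n]_q! = [n]_q [n-1]_q ⋯ [1]_q`. -/
noncomputable def qFact (n : ℕ) : Polynomial ℚ := ∏ k ∈ Finset.range n, qInt (k + 1)

/-- `rank(λ) = ∑_i (i-1) λ_i`, i.e. the sum of the (0-indexed) row numbers of the
cells of `λ`. -/
def diagramRank (μ : YoungDiagram) : ℕ := ∑ c ∈ μ.cells, c.1

/-!
A standard tableau of hook shape `(a + 1, 1^k)` is determined by the set `S` of labels in its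
leg, which can be any `k`-subset of `{2, …, a + k + 1}`: the remaining labels fill the arm in
increasing order. The label `i` is a descent exactly when `i + 1 ∈ S`, so
`maj T = ∑_{s ∈ S} (s - 1)`, and summing over `S` gives the generating polynomial of `k`-subsets
of `{1, …, a + k}` by their sum. By the `q`-Pascal recurrence that polynomial is
`q^{C(k+1,2)} [a+k choose k]_q`.
-/

noncomputable def subsetSumPoly (n k : ℕ) : ℚ[X] :=
  ∑ S ∈ powersetCard k (Icc 1 n), X ^ ∑ s ∈ S, s

lemma subsetSumPoly_zero_right (n : ℕ) : subsetSumPoly n 0 = 1 := by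
  simp [subsetSumPoly]

lemma subsetSumPoly_eq_zero_of_lt {n k : ℕ} (h : n < k) : subsetSumPoly n k = 0 := by
  rw [subsetSumPoly, powersetCard_eq_empty.2 (by simpa using h), sum_empty]

lemma subsetSumPoly_succ_succ (n k : ℕ) :
    subsetSumPoly (n + 1) (k + 1) =
      subsetSumPoly n (k + 1) + X ^ (n + 1) * subsetSumPoly n k := by
  have hn : n + 1 ∉ Icc 1 n := by simp
  have hdisj : Disjoint (powersetCard (k + 1) (Icc 1 n))
      ((powersetCard k (Icc 1 n)).image (insert (n + 1))) := by
    simp only [disjoint_left, mem_powersetCard, mem_image]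
    rintro _ ⟨hS, -⟩ ⟨S, -, rfl⟩
    exact hn (hS (mem_insert_self _ _))
  rw [subsetSumPoly, ← insert_Icc_right_eq_Icc_add_one (by omega), powersetCard_succ_insert hn,
    sum_union hdisj, sum_image, subsetSumPoly, subsetSumPoly, mul_sum]
  · refine congrArg _ (sum_congr rfl fun S hS => ?_)
    rw [sum_insert fun h => hn ((mem_powersetCard.1 hS).1 h), pow_add]
  · intro S hS S' hS' h
    simp only [mem_coe, mem_powersetCard] at hS hS'
    rw [← erase_insert fun h => hn (hS.1 h), ← erase_insert fun h => hn (hS'.1 h), h]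

lemma qFact_zero : qFact 0 = 1 := prod_range_zero _

lemma qFact_succ (n : ℕ) : qFact (n + 1) = qFact n * qInt (n + 1) := prod_range_succ _ _

lemma qInt_add (a b : ℕ) : qInt (a + b) = qInt a + X ^ a * qInt b := by
  simp only [qInt, sum_range_add, mul_sum, pow_add]

lemma subsetSumPoly_mul_qFact (a k : ℕ) :
    subsetSumPoly (a + k) k * qFact k * qFact a = X ^ (k + 1).choose 2 * qFact (a + k) := by
  induction k generalizing a with
  | zero => simp [subsetSumPoly_zero_right, qFact_zero]
  | succ k ihk =>
    have hchoose : (k + 1 + 1).choose 2 = (k + 1).choose 2 + (k + 1) := by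
      rw [Nat.choose_succ_succ', Nat.choose_one_right, add_comm]
    induction a with
    | zero =>
      have h0 := ihk 0
      rw [zero_add, qFact_zero, mul_one] at h0
      rw [zero_add, subsetSumPoly_succ_succ, subsetSumPoly_eq_zero_of_lt (lt_add_one k),
        qFact_zero, qFact_succ, hchoose, pow_add]
      linear_combination X ^ (k + 1) * qInt (k + 1) * h0
    | succ a iha =>
      have h1 := ihk (a + 1)
      rw [show a + 1 + k = a + (k + 1) by omega, qFact_succ a] at h1
      rw [qFact_succ k, hchoose, pow_add] at iha
      -- `q^(k+1) [a+1] + q^(a+k+2) [k+1] = q^(k+1) [a+k+2]`, by `qInt_add`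
      rw [show a + 1 + (k + 1) = a + (k + 1) + 1 by omega, subsetSumPoly_succ_succ,
        qFact_succ (a + (k + 1)), qFact_succ k, qFact_succ a,
        show a + (k + 1) + 1 = (a + 1) + (k + 1) by omega, qInt_add (a + 1) (k + 1), hchoose,
        pow_add]
      linear_combination qInt (a + 1) * iha + X ^ (a + 1 + (k + 1)) * qInt (k + 1) * h1

lemma sum_powersetCard_Icc_two_pow_sum_sub_one (n k : ℕ) :
    ∑ S ∈ powersetCard k (Icc 2 (n + 1)), (X : ℚ[X]) ^ ∑ s ∈ S, (s - 1) =
      subsetSumPoly n k := by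
  rw [← map_add_right_Icc 1 n 1, powersetCard_map, sum_map, subsetSumPoly]
  refine sum_congr rfl fun S _ => ?_
  simp [sum_map]

section Tableau

variable {μ : YoungDiagram}

lemma SYT.label_mem (T : SYT μ) (c : μ.cells) : (T.1 c : ℕ) ∈ Icc 1 #μ.cells := (T.1 c).2

lemma SYT.label_injective (T : SYT μ) : Function.Injective fun c => (T.1 c : ℕ) :=
  fun _ _ h => T.2.1.1 (Subtype.ext h)

-- For a hook these are the labels of the leg.
def legLabels (T : SYT μ) : Finset ℕ :=
  (univ.filter fun c : μ.cells => 0 < c.1.1).image fun c => (T.1 c : ℕ)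

lemma legLabels_subset (T : SYT μ) : legLabels T ⊆ Icc 2 #μ.cells := by
  intro s hs
  obtain ⟨c, hc, rfl⟩ := mem_image.1 hs
  have h0 : ((0 : ℕ), c.1.2) ∈ μ.cells := μ.up_left_mem (Nat.zero_le _) le_rfl c.2
  have hlt := T.2.2 ⟨_, h0⟩ c (Or.inr ⟨rfl, by simpa using hc⟩)
  have := mem_Icc.1 (T.label_mem ⟨_, h0⟩)
  have := mem_Icc.1 (T.label_mem c)
  exact mem_Icc.2 ⟨by omega, by omega⟩

end Tableau

section Hook

variable {a k : ℕ} {μ : YoungDiagram}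

lemma mem_of_rowLens_eq_hook (hμ : μ.rowLens = (a + 1) :: List.replicate k 1) {i j : ℕ} :
    (i, j) ∈ μ ↔ i = 0 ∧ j ≤ a ∨ 0 < i ∧ i ≤ k ∧ j = 0 := by
  have hlen : μ.colLen 0 = k + 1 := by
    rw [← YoungDiagram.length_rowLens, hμ, List.length_cons, List.length_replicate]
  rcases lt_or_ge i (k + 1) with hi | hi
  · have hrow : μ.rowLen i = ((a + 1) :: List.replicate k 1)[i]'(by simpa using hi) := by
      rw [← YoungDiagram.get_rowLens (h := by simpa [hlen] using hi)]
      exact List.getElem_of_eq hμ _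
    rw [YoungDiagram.mem_iff_lt_rowLen, hrow]
    cases i
    · simp
    · simp only [List.getElem_cons_succ, List.getElem_replicate]
      omega
  · have hnot : (i, j) ∉ μ := fun h => by
      have := YoungDiagram.mem_iff_lt_colLen.1 (μ.up_left_mem le_rfl (Nat.zero_le j) h)
      omega
    simp only [hnot, false_iff]
    omega

lemma cell_of_rowLens_eq_hook (hμ : μ.rowLens = (a + 1) :: List.replicate k 1) (c : μ.cells) :
    c.1.1 = 0 ∧ c.1.2 ≤ a ∨ 0 < c.1.1 ∧ c.1.1 ≤ k ∧ c.1.2 = 0 :=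
  (mem_of_rowLens_eq_hook hμ).1 c.2

lemma cells_eq_of_rowLens_eq_hook (hμ : μ.rowLens = (a + 1) :: List.replicate k 1) :
    μ.cells = {0} ×ˢ range (a + 1) ∪ Icc 1 k ×ˢ {0} := by
  ext ⟨i, j⟩
  simp only [YoungDiagram.mem_cells, mem_of_rowLens_eq_hook hμ, mem_union, mem_product,
    mem_singleton, mem_range, mem_Icc]
  omega

lemma card_cells_of_rowLens_eq_hook (hμ : μ.rowLens = (a + 1) :: List.replicate k 1) :
    #μ.cells = a + k + 1 := by
  rw [cells_eq_of_rowLens_eq_hook hμ, card_union_of_disjoint]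
  · simp
    omega
  · simp only [disjoint_left, mem_product, mem_singleton, mem_Icc]
    omega

def armCell (hμ : μ.rowLens = (a + 1) :: List.replicate k 1) (j : Fin (a + 1)) : μ.cells :=
  ⟨(0, j), (mem_of_rowLens_eq_hook hμ).2 (Or.inl ⟨rfl, Nat.lt_succ_iff.1 j.2⟩)⟩

def legCell (hμ : μ.rowLens = (a + 1) :: List.replicate k 1) (i : Fin k) : μ.cells :=
  ⟨(i + 1, 0), (mem_of_rowLens_eq_hook hμ).2 (Or.inr ⟨Nat.succ_pos _, i.2, rfl⟩)⟩

lemma armCell_or_legCell (hμ : μ.rowLens = (a + 1) :: List.replicate k 1) (c : μ.cells) :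
    (∃ j, c = armCell hμ j) ∨ ∃ i, c = legCell hμ i := by
  obtain ⟨⟨i, j⟩, hc⟩ := c
  rcases (mem_of_rowLens_eq_hook hμ).1 hc with ⟨rfl, hj⟩ | ⟨hi, hik, rfl⟩
  · exact Or.inl ⟨⟨j, by omega⟩, rfl⟩
  · refine Or.inr ⟨⟨i - 1, by omega⟩, ?_⟩
    simp only [legCell, Nat.sub_add_cancel hi]

lemma legLabels_eq_image_legCell (hμ : μ.rowLens = (a + 1) :: List.replicate k 1) (T : SYT μ) :
    legLabels T = univ.image fun i => (T.1 (legCell hμ i) : ℕ) := by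
  ext s
  simp only [legLabels, mem_image, mem_filter, mem_univ, true_and]
  constructor
  · rintro ⟨c, hc, rfl⟩
    rcases armCell_or_legCell hμ c with ⟨j, rfl⟩ | ⟨i, rfl⟩
    · exact absurd hc (lt_irrefl 0)
    · exact ⟨i, rfl⟩
  · rintro ⟨i, rfl⟩
    exact ⟨legCell hμ i, Nat.succ_pos _, rfl⟩

lemma card_legLabels (hμ : μ.rowLens = (a + 1) :: List.replicate k 1) (T : SYT μ) :
    #(legLabels T) = k := by
  rw [legLabels_eq_image_legCell hμ, card_image_of_injective, card_univ, Fintype.card_fin]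
  intro i i' h
  have := congrArg (fun c : μ.cells => c.1.1) (T.label_injective h)
  simp only [legCell, add_left_inj] at this
  exact Fin.ext this

lemma legLabels_mem_powersetCard (hμ : μ.rowLens = (a + 1) :: List.replicate k 1) (T : SYT μ) :
    legLabels T ∈ powersetCard k (Icc 2 (a + k + 1)) :=
  mem_powersetCard.2
    ⟨card_cells_of_rowLens_eq_hook hμ ▸ legLabels_subset T, card_legLabels hμ T⟩

lemma card_Icc_sdiff_of_mem_powersetCard {S : Finset ℕ}
    (hS : S ∈ powersetCard k (Icc 2 (a + k + 1))) : #(Icc 1 (a + k + 1) \ S) = a + 1 := by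
  obtain ⟨hsub, hcard⟩ := mem_powersetCard.1 hS
  rw [card_sdiff_of_subset (hsub.trans (Icc_subset_Icc_left one_le_two)), Nat.card_Icc, hcard]
  omega

lemma label_legCell_eq_orderEmbOfFin (hμ : μ.rowLens = (a + 1) :: List.replicate k 1)
    (T : SYT μ) :
    (fun i => (T.1 (legCell hμ i) : ℕ)) =
      (legLabels T).orderEmbOfFin (card_legLabels hμ T) := by
  refine orderEmbOfFin_unique _ (fun i => ?_) fun i i' h => T.2.2 _ _ (Or.inr ⟨rfl, ?_⟩)
  · rw [legLabels_eq_image_legCell hμ]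
    exact mem_image_of_mem _ (mem_univ i)
  · simpa [legCell] using h

lemma label_armCell_eq_orderEmbOfFin (hμ : μ.rowLens = (a + 1) :: List.replicate k 1)
    (T : SYT μ) :
    (fun j => (T.1 (armCell hμ j) : ℕ)) = (Icc 1 (a + k + 1) \ legLabels T).orderEmbOfFin
      (card_Icc_sdiff_of_mem_powersetCard (legLabels_mem_powersetCard hμ T)) := by
  refine orderEmbOfFin_unique _ (fun j => mem_sdiff.2 ⟨?_, ?_⟩)
    fun j j' h => T.2.2 _ _ (Or.inl ⟨rfl, h⟩)
  · exact card_cells_of_rowLens_eq_hook hμ ▸ T.label_mem _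
  · simp only [legLabels, mem_image, mem_filter, mem_univ, true_and, not_exists, not_and]
    intro c hc h
    rw [T.label_injective h] at hc
    exact lt_irrefl 0 hc

lemma fst_lt_of_label_add_one_eq (hμ : μ.rowLens = (a + 1) :: List.replicate k 1) (T : SYT μ)
    {c c' : μ.cells} (hc' : 0 < c'.1.1) (h : (T.1 c : ℕ) + 1 = T.1 c') : c.1.1 < c'.1.1 := by
  by_contra! hle
  have hc := cell_of_rowLens_eq_hook hμ c
  have hc'' := cell_of_rowLens_eq_hook hμ c'
  rcases hle.eq_or_lt with heq | hlt
  · have : c' = c := Subtype.ext (Prod.ext heq (by omega))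
    subst this
    omega
  · have := T.2.2 c' c (Or.inr ⟨by omega, hlt⟩)
    omega

lemma maj_eq_sum_legLabels (hμ : μ.rowLens = (a + 1) :: List.replicate k 1) (T : SYT μ) :
    maj T = ∑ s ∈ legLabels T, (s - 1) := by
  have hcard := card_cells_of_rowLens_eq_hook hμ
  have hge (s) (hs : s ∈ legLabels T) := mem_Icc.1 (legLabels_subset T hs)
  rw [maj]
  refine sum_nbij' (· + 1) (· - 1) ?_ ?_ (fun _ _ => rfl) (fun s hs => ?_) (fun _ _ => rfl)
  · simp only [mem_filter]
    rintro i ⟨-, c, c', -, hc', hlt⟩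
    exact mem_image.2 ⟨c', by simpa using (Nat.zero_le _).trans_lt hlt, hc'⟩
  · intro s hs
    have hs2 := hge s hs
    obtain ⟨c', hc', rfl⟩ := mem_image.1 hs
    obtain ⟨c, hc⟩ := T.2.1.2 ⟨(T.1 c' : ℕ) - 1, mem_Icc.2 ⟨by omega, by omega⟩⟩
    have hTc : (T.1 c : ℕ) = T.1 c' - 1 := by rw [hc]
    simp only [mem_filter, mem_Icc]
    exact ⟨⟨by omega, by omega⟩, c, c', hTc, by omega,
      fst_lt_of_label_add_one_eq hμ T (by simpa using (mem_filter.1 hc').2) (by omega)⟩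
  · have := hge s hs
    omega

variable {S : Finset ℕ}

noncomputable def hookLabel (hμ : μ.rowLens = (a + 1) :: List.replicate k 1)
    (hS : S ∈ powersetCard k (Icc 2 (a + k + 1))) (c : μ.cells) : ℕ :=
  if h : c.1.1 = 0 then
    (Icc 1 (a + k + 1) \ S).orderEmbOfFin (card_Icc_sdiff_of_mem_powersetCard hS)
      ⟨c.1.2, by have := cell_of_rowLens_eq_hook hμ c; omega⟩
  else
    S.orderEmbOfFin (mem_powersetCard.1 hS).2
      ⟨c.1.1 - 1, by have := cell_of_rowLens_eq_hook hμ c; omega⟩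

lemma hookLabel_armCell (hμ : μ.rowLens = (a + 1) :: List.replicate k 1)
    (hS : S ∈ powersetCard k (Icc 2 (a + k + 1))) (j : Fin (a + 1)) :
    hookLabel hμ hS (armCell hμ j) =
      (Icc 1 (a + k + 1) \ S).orderEmbOfFin (card_Icc_sdiff_of_mem_powersetCard hS) j := by
  simp [hookLabel, armCell]

lemma hookLabel_legCell (hμ : μ.rowLens = (a + 1) :: List.replicate k 1)
    (hS : S ∈ powersetCard k (Icc 2 (a + k + 1))) (i : Fin k) :
    hookLabel hμ hS (legCell hμ i) = S.orderEmbOfFin (mem_powersetCard.1 hS).2 i := by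
  simp [hookLabel, legCell]
lemma hookLabel_mem (hμ : μ.rowLens = (a + 1) :: List.replicate k 1)
    (hS : S ∈ powersetCard k (Icc 2 (a + k + 1))) (c : μ.cells) :
    hookLabel hμ hS c ∈ Icc 1 (a + k + 1) := by
  rcases armCell_or_legCell hμ c with ⟨j, rfl⟩ | ⟨i, rfl⟩
  · rw [hookLabel_armCell]
    exact (mem_sdiff.1 (orderEmbOfFin_mem _ _ j)).1
  · rw [hookLabel_legCell]
    exact Icc_subset_Icc_left one_le_two ((mem_powersetCard.1 hS).1 (orderEmbOfFin_mem _ _ i))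

lemma hookLabel_injective (hμ : μ.rowLens = (a + 1) :: List.replicate k 1)
    (hS : S ∈ powersetCard k (Icc 2 (a + k + 1))) : Function.Injective (hookLabel hμ hS) := by
  have hdisj (j i) :
      (Icc 1 (a + k + 1) \ S).orderEmbOfFin (card_Icc_sdiff_of_mem_powersetCard hS) j ≠
        S.orderEmbOfFin (mem_powersetCard.1 hS).2 i := fun h =>
    (mem_sdiff.1 (h ▸ orderEmbOfFin_mem _ _ j)).2 (orderEmbOfFin_mem _ _ i)
  intro c c' h
  rcases armCell_or_legCell hμ c with ⟨j, rfl⟩ | ⟨i, rfl⟩ <;>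
    rcases armCell_or_legCell hμ c' with ⟨j', rfl⟩ | ⟨i', rfl⟩ <;>
    simp only [hookLabel_armCell, hookLabel_legCell] at h
  · rw [(orderEmbOfFin _ _).injective h]
  · exact absurd h (hdisj j i')
  · exact absurd h.symm (hdisj j' i)
  · rw [(orderEmbOfFin _ _).injective h]

lemma hookLabel_lt (hμ : μ.rowLens = (a + 1) :: List.replicate k 1)
    (hS : S ∈ powersetCard k (Icc 2 (a + k + 1))) (c c' : μ.cells)
    (h : c.1.1 = c'.1.1 ∧ c.1.2 < c'.1.2 ∨ c.1.2 = c'.1.2 ∧ c.1.1 < c'.1.1) :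
    hookLabel hμ hS c < hookLabel hμ hS c' := by
  obtain ⟨hSsub, hScard⟩ := mem_powersetCard.1 hS
  rcases armCell_or_legCell hμ c with ⟨j, rfl⟩ | ⟨i, rfl⟩ <;>
    rcases armCell_or_legCell hμ c' with ⟨j', rfl⟩ | ⟨i', rfl⟩ <;>
    simp only [hookLabel_armCell, hookLabel_legCell] <;> simp only [armCell, legCell] at h
  · exact (orderEmbOfFin _ _).strictMono (Fin.lt_def.2 (by omega))
  · -- the corner carries the label `1`, and every leg label is at least `2`
    have h1 : 1 ∈ Icc 1 (a + k + 1) \ S :=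
      mem_sdiff.2 ⟨by simp, fun h1 => by simpa using hSsub h1⟩
    have hj : j = ⟨0, Nat.succ_pos a⟩ := Fin.ext (show (j : ℕ) = 0 by omega)
    rw [hj, orderEmbOfFin_zero]
    calc _ ≤ 1 := min'_le _ _ h1
      _ < 2 := one_lt_two
      _ ≤ _ := (mem_Icc.1 (hSsub (orderEmbOfFin_mem _ _ i'))).1
  · omega
  · exact (orderEmbOfFin _ _).strictMono (Fin.lt_def.2 (by omega))

noncomputable def hookTableau (hμ : μ.rowLens = (a + 1) :: List.replicate k 1)
    (hS : S ∈ powersetCard k (Icc 2 (a + k + 1))) : SYT μ :=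
  ⟨fun c => ⟨hookLabel hμ hS c,
      card_cells_of_rowLens_eq_hook hμ ▸ hookLabel_mem hμ hS c⟩,
    (Fintype.bijective_iff_injective_and_card _).2
      ⟨fun _ _ h => hookLabel_injective hμ hS (congrArg Subtype.val h), by simp⟩,
    hookLabel_lt hμ hS⟩

lemma legLabels_hookTableau (hμ : μ.rowLens = (a + 1) :: List.replicate k 1)
    (hS : S ∈ powersetCard k (Icc 2 (a + k + 1))) : legLabels (hookTableau hμ hS) = S := by
  simp [legLabels_eq_image_legCell hμ, hookTableau, hookLabel_legCell]

lemma hookTableau_legLabels (hμ : μ.rowLens = (a + 1) :: List.replicate k 1) (T : SYT μ) :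
    hookTableau hμ (legLabels_mem_powersetCard hμ T) = T := by
  have hT := legLabels_mem_powersetCard hμ T
  refine Subtype.ext (funext fun c => Subtype.ext ?_)
  rcases armCell_or_legCell hμ c with ⟨j, rfl⟩ | ⟨i, rfl⟩
  · exact (hookLabel_armCell hμ hT j).trans
      (congrFun (label_armCell_eq_orderEmbOfFin hμ T) j).symm
  · exact (hookLabel_legCell hμ hT i).trans
      (congrFun (label_legCell_eq_orderEmbOfFin hμ T) i).symm

end Hook

lemma sum_pow_maj_of_rowLens_eq_hook {a k : ℕ} {μ : YoungDiagram}
    (hμ : μ.rowLens = (a + 1) :: List.replicate k 1) :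
    ∑ T : SYT μ, (X : ℚ[X]) ^ maj T = subsetSumPoly (a + k) k := by
  rw [← sum_powersetCard_Icc_two_pow_sum_sub_one]
  exact sum_bij' (fun T _ => legLabels T) (fun S hS => hookTableau hμ hS)
    (fun T _ => legLabels_mem_powersetCard hμ T) (fun _ _ => mem_univ _)
    (fun T _ => hookTableau_legLabels hμ T) (fun _ hS => legLabels_hookTableau hμ hS)
    (fun T _ => by rw [maj_eq_sum_legLabels hμ])

theorem syt_maj_hook_shape_general (n k : ℕ) (hkn : k ≤ n - 1)
    (μ : YoungDiagram) (hμ : μ.rowLens = (n - k + 1) :: List.replicate k 1) :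
    (∑ T : SYT μ, (Polynomial.X : Polynomial ℚ) ^ maj T) * qFact k * qFact (n - k) =
      (Polynomial.X : Polynomial ℚ) ^ (k + 1).choose 2 * qFact n := by
  rw [sum_pow_maj_of_rowLens_eq_hook hμ, subsetSumPoly_mul_qFact, Nat.sub_add_cancel (by omega)]

/-- For the hook partition `λ = (n - k + 1, 1^k)` of `n`,
`∑_{T ∈ SYT(λ)} q^{maj T} = q^{C(k+1,2)} · C(n,k)_q` (stated multiplied through by
`[k]_q! [n-k]_q!`). -/
theorem syt_maj_hook_shape (n k : ℕ) (hk : 1 ≤ n - k + 1) (hkn : k ≤ n - 1)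
    (μ : YoungDiagram) (hμ : μ.rowLens = (n - k + 1) :: List.replicate k 1) :
    (∑ T : SYT μ, (Polynomial.X : Polynomial ℚ) ^ maj T) * qFact k * qFact (n - k) =
      (Polynomial.X : Polynomial ℚ) ^ (k + 1).choose 2 * qFact n :=
  syt_maj_hook_shape_general n k hkn μ hμ
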